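/- (Proposition 2, non-asymptotic form) Suppose y_1,…,y_n are independent with E y_i = γ'(x_{i·}ᵀ β°) for a convex differentiable γ, and ε_i = y_i − E y_i are σ-subgaussian. Let a ∈ (0,1), α ∈ (0,1), set λ² = 2 a^{-2} σ² x_W² log(2p/α), let β̂ be a (measurable) random vector that almost surely minimizes β ↦ ℓ(β) + λ Σ_{k=1}^r ‖W_k β_k‖, and assume ζ_{a,W} > 0. If τ > 0 satisfies 8 (1 + a)² a^{-2} x_W² ζ_{a,W}^{-2} σ² log(2p/α) ≤ τ² and τ² < Δ²/4, then with probability at least 1 − α the following holds simultaneously for every group k and all 0 ≤ j_1, j_2 ≤ p_k (with the convention β̂_{0,k} = β°_{0,k} = 0): |β̂_{j_1,k} − β̂_{j_2,k}| ≤ τ if and only if β°_{j_1,k} = β°_{j_2,k}; i.e., merging levels whose β̂-coefficients differ by at most τ recovers the true model M_{β°}. -/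

import Mathlib

open MeasureTheory ProbabilityTheory
open scoped BigOperators ENNReal Classical

/-- The group norm `‖W_k β_k‖`. -/
noncomputable def groupNorm {r : ℕ} {p : Fin r → ℕ}
    (w β : ((k : Fin r) × Fin (p k)) → ℝ) (k : Fin r) : ℝ :=
  Real.sqrt (∑ j : Fin (p k), (w ⟨k, j⟩ * β ⟨k, j⟩) ^ 2)

/-- The sup norm `|v|_∞`. -/
noncomputable def supNorm {ι : Type*} [Fintype ι] (v : ι → ℝ) : ℝ := ⨆ c, |v c|

/-- The inner product `x_{i·}ᵀ β` of the `i`-th row of the design `X` with `β`. -/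
def dotRow {n r : ℕ} {p : Fin r → ℕ}
    (X : Fin n → ((k : Fin r) × Fin (p k)) → ℝ) (i : Fin n)
    (β : ((k : Fin r) × Fin (p k)) → ℝ) : ℝ :=
  ∑ c, X i c * β c

/-- The Euclidean norm `‖x_{j,k}‖` of column `c = (j,k)` of `X`. -/
noncomputable def colNorm {n r : ℕ} {p : Fin r → ℕ}
    (X : Fin n → ((k : Fin r) × Fin (p k)) → ℝ) (c : (k : Fin r) × Fin (p k)) : ℝ :=
  Real.sqrt (∑ i, (X i c) ^ 2)

/-- `x_W = max_{j,k} ‖x_{j,k}‖ / w_{j,k}`. -/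
noncomputable def xW {n r : ℕ} {p : Fin r → ℕ}
    (X : Fin n → ((k : Fin r) × Fin (p k)) → ℝ)
    (w : ((k : Fin r) × Fin (p k)) → ℝ) : ℝ :=
  ⨆ c, colNorm X c / w c

/-- The negative log-likelihood loss `ℓ(β) = ∑_i [γ(x_{i·}ᵀβ) − y_i x_{i·}ᵀβ]`
(at sample point `ω`). -/
noncomputable def loss {Ω : Type*} {n r : ℕ} {p : Fin r → ℕ}
    (X : Fin n → ((k : Fin r) × Fin (p k)) → ℝ) (γ : ℝ → ℝ)
    (y : Fin n → Ω → ℝ) (ω : Ω) (β : ((k : Fin r) × Fin (p k)) → ℝ) : ℝ :=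
  ∑ i, (γ (dotRow X i β) - y i ω * dotRow X i β)

/-- Coordinate `c` of `∇ℓ(β° + ν) − ∇ℓ(β°)`, which does not depend on `y`:
`∑_i (γ'(x_{i·}ᵀ(β°+ν)) − γ'(x_{i·}ᵀβ°)) x_{i,c}`. -/
noncomputable def gradDiff {n r : ℕ} {p : Fin r → ℕ}
    (X : Fin n → ((k : Fin r) × Fin (p k)) → ℝ) (γ : ℝ → ℝ)
    (βo ν : ((k : Fin r) × Fin (p k)) → ℝ) (c : (k : Fin r) × Fin (p k)) : ℝ :=
  ∑ i, (deriv γ (dotRow X i (βo + ν)) - deriv γ (dotRow X i βo)) * X i c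

/-- Membership in the cone `C_{a,W}` where `S = {k : βo_k ≠ 0}`. -/
def InCone {r : ℕ} {p : Fin r → ℕ}
    (βo w : ((k : Fin r) × Fin (p k)) → ℝ) (a : ℝ)
    (v : ((k : Fin r) × Fin (p k)) → ℝ) : Prop :=
  ∑ k : Fin r, (if ∀ j : Fin (p k), βo ⟨k, j⟩ = 0 then groupNorm w v k else 0)
    ≤ ∑ k : Fin r, (if ∀ j : Fin (p k), βo ⟨k, j⟩ = 0 then 0 else groupNorm w v k)
      + a * ∑ c, |w c * v c|

/-- The Cone Invertibility Factor
`ζ_{a,W} = inf_{0 ≠ ν ∈ C_{a,W}} |W⁻¹(∇ℓ(β°+ν) − ∇ℓ(β°))|_∞ / |ν|_∞`. -/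
noncomputable def cif {n r : ℕ} {p : Fin r → ℕ}
    (X : Fin n → ((k : Fin r) × Fin (p k)) → ℝ) (γ : ℝ → ℝ)
    (βo w : ((k : Fin r) × Fin (p k)) → ℝ) (a : ℝ) : ℝ :=
  sInf {z : ℝ | ∃ ν : ((k : Fin r) × Fin (p k)) → ℝ, ν ≠ 0 ∧ InCone βo w a ν ∧
    z = supNorm (fun c => gradDiff X γ βo ν c / w c) / supNorm ν}


/-- The value of the coefficient of level `j` of factor `k`, with the convention that
the reference level (`none`) has coefficient `0`. -/
def levelVal {r : ℕ} {p : Fin r → ℕ} (β : ((k : Fin r) × Fin (p k)) → ℝ)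
    (k : Fin r) (j : Option (Fin (p k))) : ℝ :=
  j.elim 0 (fun j' => β ⟨k, j'⟩)

/-!
On the event that every coordinate of the score satisfies `|∇ℓ(β°)_c| ≤ a λ w_c`, comparing the
objective at `β̂` and at `β°` and using convexity of `ℓ` puts the error `ν = β̂ - β°` in the cone
`C_{a,W}`, while the optimality conditions at `β̂` give `|∇ℓ(β̂)_c| ≤ λ w_c`. The definition of
`ζ_{a,W}` then yields `|ν|_∞ ≤ (1 + a) λ / ζ_{a,W} ≤ τ / 2`, and since distinct true levels are
`Δ > 2τ` apart, thresholding at `τ` recovers exactly the equalities between them.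
The score is `-∑_i x_{i,c} ε_i`, a weighted sum of independent subgaussian variables, so by
Hoeffding's inequality and a union bound over the `p` coordinates the event fails with probability
at most `α`; the value of `λ` makes each of the `p` terms equal to `α / p`.
-/

section SupNorm

variable {ι : Type*} [Fintype ι]

lemma supNorm_nonneg (v : ι → ℝ) : 0 ≤ supNorm v :=
  Real.iSup_nonneg fun _ => abs_nonneg _

lemma abs_le_supNorm (v : ι → ℝ) (c : ι) : |v c| ≤ supNorm v :=
  le_ciSup (f := fun c => |v c|) (Set.finite_range _).bddAbove c

lemma supNorm_le [Nonempty ι] {v : ι → ℝ} {B : ℝ} (h : ∀ c, |v c| ≤ B) : supNorm v ≤ B :=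
  ciSup_le h

lemma supNorm_pos {v : ι → ℝ} (hv : v ≠ 0) : 0 < supNorm v := by
  obtain ⟨c, hc⟩ := Function.ne_iff.mp hv
  exact (abs_pos.mpr hc).trans_le (abs_le_supNorm v c)

lemma supNorm_zero : supNorm (0 : ι → ℝ) = 0 := by
  simp [supNorm]

end SupNorm

section GroupNorm

variable {r : ℕ} {p : Fin r → ℕ} (w : ((k : Fin r) × Fin (p k)) → ℝ)

lemma groupNorm_eq_norm (β : ((k : Fin r) × Fin (p k)) → ℝ) (k : Fin r) :
    groupNorm w β k = ‖WithLp.toLp 2 fun j : Fin (p k) => w ⟨k, j⟩ * β ⟨k, j⟩‖ := by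
  simp [groupNorm, EuclideanSpace.norm_eq, ← abs_mul]

lemma groupNorm_add_le (β β' : ((k : Fin r) × Fin (p k)) → ℝ) (k : Fin r) :
    groupNorm w (β + β') k ≤ groupNorm w β k + groupNorm w β' k := by
  have hsplit : (fun j : Fin (p k) => w ⟨k, j⟩ * (β + β') ⟨k, j⟩)
      = (fun j => w ⟨k, j⟩ * β ⟨k, j⟩) + fun j => w ⟨k, j⟩ * β' ⟨k, j⟩ := by
    ext j; simp [mul_add]
  simp only [groupNorm_eq_norm, hsplit, WithLp.toLp_add]
  exact norm_add_le _ _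

lemma groupNorm_sub_groupNorm_le (β β' : ((k : Fin r) × Fin (p k)) → ℝ) (k : Fin r) :
    groupNorm w β k - groupNorm w β' k ≤ groupNorm w (β - β') k := by
  have hsplit : (fun j : Fin (p k) => w ⟨k, j⟩ * (β - β') ⟨k, j⟩)
      = (fun j => w ⟨k, j⟩ * β ⟨k, j⟩) - fun j => w ⟨k, j⟩ * β' ⟨k, j⟩ := by
    ext j; simp [mul_sub]
  simp only [groupNorm_eq_norm, hsplit, WithLp.toLp_sub]
  exact norm_sub_norm_le _ _

lemma groupNorm_congr {β β' : ((k : Fin r) × Fin (p k)) → ℝ} {k : Fin r}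
    (h : ∀ j, β ⟨k, j⟩ = β' ⟨k, j⟩) : groupNorm w β k = groupNorm w β' k := by
  simp [groupNorm, h]

lemma sum_groupNorm_single (c : (k : Fin r) × Fin (p k)) (t : ℝ) :
    ∑ k, groupNorm w (Pi.single c t) k = |w c * t| := by
  obtain ⟨k₀, j₀⟩ := c
  rw [Finset.sum_eq_single k₀]
  · simp [groupNorm, Pi.single_apply, Real.sqrt_sq_eq_abs]
  · intro k _ hk
    simp [groupNorm, hk]
  · simp

lemma sum_groupNorm_add_single_le (β : ((k : Fin r) × Fin (p k)) → ℝ)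
    (c : (k : Fin r) × Fin (p k)) (t : ℝ) :
    ∑ k, groupNorm w (β + Pi.single c t) k ≤ ∑ k, groupNorm w β k + |w c * t| := by
  rw [← sum_groupNorm_single w c t, ← Finset.sum_add_distrib]
  exact Finset.sum_le_sum fun k _ => groupNorm_add_le w β _ k

lemma groupNorm_sub_comm (β β' : ((k : Fin r) × Fin (p k)) → ℝ) (k : Fin r) :
    groupNorm w (β - β') k = groupNorm w (β' - β) k := by
  unfold groupNorm
  congr 1
  exact Finset.sum_congr rfl fun j _ => by simp only [Pi.sub_apply]; ring

/-- Per group, the penalty can only drop on the true support `S`, and by at most the norm of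
the error there. -/
lemma groupNorm_sub_groupNorm_le_ite (βo βh : ((k : Fin r) × Fin (p k)) → ℝ) (k : Fin r) :
    groupNorm w βo k - groupNorm w βh k ≤
      (if ∀ j, βo ⟨k, j⟩ = 0 then 0 else groupNorm w (βh - βo) k)
        - (if ∀ j, βo ⟨k, j⟩ = 0 then groupNorm w (βh - βo) k else 0) := by
  split_ifs with hk
  · have hβo : groupNorm w βo k = 0 := by
      rw [groupNorm_congr w (β' := 0) hk]
      simp [groupNorm]
    have hβh : groupNorm w βh k = groupNorm w (βh - βo) k :=
      groupNorm_congr w fun j => by simp [hk j]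
    rw [hβo, hβh]
  · rw [sub_zero, groupNorm_sub_comm]
    exact groupNorm_sub_groupNorm_le w βo βh k

end GroupNorm

lemma abs_le_of_hasDerivAt_of_forall_le {f : ℝ → ℝ} {f' M : ℝ} (hf : HasDerivAt f f' 0)
    (h : ∀ t, f 0 ≤ f t + M * |t|) : |f'| ≤ M := by
  refine abs_le.mpr ⟨ge_of_tendsto hf.tendsto_slope_zero_right ?_,
    le_of_tendsto hf.tendsto_slope_zero_left ?_⟩
  · filter_upwards [self_mem_nhdsWithin] with t (ht : 0 < t)
    have := h t
    rw [abs_of_pos ht] at this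
    rw [zero_add, smul_eq_mul, le_inv_mul_iff₀ ht]
    linarith
  · filter_upwards [self_mem_nhdsWithin] with t (ht : t < 0)
    have := h t
    rw [abs_of_neg ht] at this
    rw [zero_add, smul_eq_mul, ← div_eq_inv_mul, div_le_iff_of_neg ht]
    linarith

lemma ConvexOn.deriv_mul_sub_le {S : Set ℝ} {f : ℝ → ℝ} {x y : ℝ} (hf : ConvexOn ℝ S f)
    (hx : x ∈ S) (hy : y ∈ S) (hfx : DifferentiableAt ℝ f x) :
    deriv f x * (y - x) ≤ f y - f x := by
  rcases lt_trichotomy x y with hxy | rfl | hxy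
  · have := hf.deriv_le_slope hx hy hxy hfx
    rwa [slope_def_field, le_div_iff₀ (sub_pos.mpr hxy)] at this
  · simp
  · have := hf.slope_le_deriv hy hx hxy hfx
    rw [slope_def_field, div_le_iff₀ (sub_pos.mpr hxy)] at this
    linarith

section GroupLasso

variable {Ω : Type*} {n r : ℕ} {p : Fin r → ℕ} (X : Fin n → ((k : Fin r) × Fin (p k)) → ℝ)
  (γ : ℝ → ℝ) (y : Fin n → Ω → ℝ) (ω : Ω)

/-- The coordinate `c` of `∇ℓ(β)`. -/
noncomputable def lossGrad (β : ((k : Fin r) × Fin (p k)) → ℝ) (c : (k : Fin r) × Fin (p k)) :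
    ℝ :=
  ∑ i, (deriv γ (dotRow X i β) - y i ω) * X i c

noncomputable def groupLassoObjective (w : ((k : Fin r) × Fin (p k)) → ℝ) (lam : ℝ)
    (β : ((k : Fin r) × Fin (p k)) → ℝ) : ℝ :=
  loss X γ y ω β + lam * ∑ k, groupNorm w β k

lemma dotRow_add (i : Fin n) (β β' : ((k : Fin r) × Fin (p k)) → ℝ) :
    dotRow X i (β + β') = dotRow X i β + dotRow X i β' := by
  simp [dotRow, mul_add, Finset.sum_add_distrib]

lemma dotRow_single (i : Fin n) (c : (k : Fin r) × Fin (p k)) (t : ℝ) :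
    dotRow X i (Pi.single c t) = X i c * t := by
  simp [dotRow, Pi.single_apply]

lemma gradDiff_eq_lossGrad_sub (βo ν : ((k : Fin r) × Fin (p k)) → ℝ)
    (c : (k : Fin r) × Fin (p k)) :
    gradDiff X γ βo ν c = lossGrad X γ y ω (βo + ν) c - lossGrad X γ y ω βo c := by
  simp only [gradDiff, lossGrad, ← Finset.sum_sub_distrib]
  exact Finset.sum_congr rfl fun i _ => by ring

variable {X γ y ω}

lemma hasDerivAt_loss_add_single (hγ : Differentiable ℝ γ) (β : ((k : Fin r) × Fin (p k)) → ℝ)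
    (c : (k : Fin r) × Fin (p k)) :
    HasDerivAt (fun t => loss X γ y ω (β + Pi.single c t)) (lossGrad X γ y ω β c) 0 := by
  simp only [loss, lossGrad, dotRow_add, dotRow_single]
  refine HasDerivAt.fun_sum fun i _ => ?_
  have hline : HasDerivAt (fun t => dotRow X i β + X i c * t) (X i c) 0 := by
    simpa using ((hasDerivAt_id (0 : ℝ)).const_mul (X i c)).const_add (dotRow X i β)
  have hγline : HasDerivAt (fun t => γ (dotRow X i β + X i c * t))
      (deriv γ (dotRow X i β) * X i c) 0 :=
    (hγ _).hasDerivAt.comp_of_eq 0 hline (by simp)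
  convert hγline.fun_sub (hline.const_mul (y i ω)) using 1
  ring

/-- Moving coordinate `c` by `t` raises the penalty by at most `lam * |w c * t|`, which bounds both
one-sided derivatives of `ℓ` along that coordinate at a minimizer. -/
lemma abs_lossGrad_le_of_isMinimizer (hγ : Differentiable ℝ γ) {w : ((k : Fin r) × Fin (p k)) → ℝ}
    {lam : ℝ} (hlam : 0 ≤ lam) {βh : ((k : Fin r) × Fin (p k)) → ℝ}
    (hmin : ∀ β, groupLassoObjective X γ y ω w lam βh ≤ groupLassoObjective X γ y ω w lam β)
    (c : (k : Fin r) × Fin (p k)) :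
    |lossGrad X γ y ω βh c| ≤ lam * |w c| := by
  refine abs_le_of_hasDerivAt_of_forall_le (hasDerivAt_loss_add_single hγ βh c) fun t => ?_
  have hobj := hmin (βh + Pi.single c t)
  have hpen := mul_le_mul_of_nonneg_left (sum_groupNorm_add_single_le w βh c t) hlam
  simp only [groupLassoObjective, Pi.single_zero, add_zero] at hobj ⊢
  rw [abs_mul] at hpen
  nlinarith

lemma loss_add_sum_lossGrad_mul_le (hconv : ConvexOn ℝ Set.univ γ) (hγ : Differentiable ℝ γ)
    (β ν : ((k : Fin r) × Fin (p k)) → ℝ) :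
    loss X γ y ω β + ∑ c, lossGrad X γ y ω β c * ν c ≤ loss X γ y ω (β + ν) := by
  have hswap : ∑ c, lossGrad X γ y ω β c * ν c
      = ∑ i, (deriv γ (dotRow X i β) - y i ω) * dotRow X i ν := by
    simp only [lossGrad, dotRow, Finset.sum_mul, Finset.mul_sum]
    rw [Finset.sum_comm]
    exact Finset.sum_congr rfl fun i _ => Finset.sum_congr rfl fun c _ => by ring
  rw [hswap, loss, loss, ← Finset.sum_add_distrib]
  refine Finset.sum_le_sum fun i _ => ?_
  have htangent := hconv.deriv_mul_sub_le (Set.mem_univ (dotRow X i β))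
    (Set.mem_univ (dotRow X i (β + ν))) (hγ _)
  rw [dotRow_add] at htangent ⊢
  nlinarith

end GroupLasso

section Deterministic

variable {Ω : Type*} {n r : ℕ} {p : Fin r → ℕ} {X : Fin n → ((k : Fin r) × Fin (p k)) → ℝ}
  {γ : ℝ → ℝ} {y : Fin n → Ω → ℝ} {ω : Ω} {w : ((k : Fin r) × Fin (p k)) → ℝ} {a lam : ℝ}
  {βo βh : ((k : Fin r) × Fin (p k)) → ℝ}

lemma inCone_sub_of_objective_le (hconv : ConvexOn ℝ Set.univ γ) (hγ : Differentiable ℝ γ)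
    (hlam : 0 < lam)
    (hmin : groupLassoObjective X γ y ω w lam βh ≤ groupLassoObjective X γ y ω w lam βo)
    (hG : ∀ c, |lossGrad X γ y ω βo c| ≤ a * lam * |w c|) :
    InCone βo w a (βh - βo) := by
  have hconvex := loss_add_sum_lossGrad_mul_le (X := X) (y := y) (ω := ω) hconv hγ βo (βh - βo)
  rw [add_sub_cancel] at hconvex
  have hgrad : -(a * lam * ∑ c, |w c * (βh - βo) c|)
      ≤ ∑ c, lossGrad X γ y ω βo c * (βh - βo) c := by
    rw [Finset.mul_sum, ← Finset.sum_neg_distrib]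
    refine Finset.sum_le_sum fun c _ => ?_
    have hc := mul_le_mul_of_nonneg_right (hG c) (abs_nonneg ((βh - βo) c))
    rw [← abs_mul, mul_assoc, ← abs_mul] at hc
    linarith [neg_abs_le (lossGrad X γ y ω βo c * (βh - βo) c)]
  have hpen := Finset.sum_le_sum fun k (_ : k ∈ Finset.univ) =>
    groupNorm_sub_groupNorm_le_ite w βo βh k
  simp only [Finset.sum_sub_distrib] at hpen
  unfold groupLassoObjective at hmin
  unfold InCone
  refine le_of_mul_le_mul_left ?_ hlam
  nlinarith [mul_le_mul_of_nonneg_left hpen hlam.le]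

lemma cif_mul_supNorm_sub_le (hconv : ConvexOn ℝ Set.univ γ) (hγ : Differentiable ℝ γ)
    (ha : 0 ≤ a) (hlam : 0 < lam)
    (hmin : ∀ β, groupLassoObjective X γ y ω w lam βh ≤ groupLassoObjective X γ y ω w lam β)
    (hG : ∀ c, |lossGrad X γ y ω βo c| ≤ a * lam * |w c|) :
    cif X γ βo w a * supNorm (βh - βo) ≤ (1 + a) * lam := by
  by_cases hν : βh - βo = 0
  · rw [hν, supNorm_zero, mul_zero]
    positivity
  have : Nonempty ((k : Fin r) × Fin (p k)) := ⟨(Function.ne_iff.mp hν).choose⟩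
  have hgradDiff : supNorm (fun c => gradDiff X γ βo (βh - βo) c / w c) ≤ (1 + a) * lam := by
    refine supNorm_le fun c => ?_
    rw [gradDiff_eq_lossGrad_sub (y := y) (ω := ω), add_sub_cancel, abs_div]
    refine div_le_of_le_mul₀ (abs_nonneg _) (by positivity) ?_
    calc |lossGrad X γ y ω βh c - lossGrad X γ y ω βo c|
        ≤ |lossGrad X γ y ω βh c| + |lossGrad X γ y ω βo c| := abs_sub _ _
      _ ≤ lam * |w c| + a * lam * |w c| :=
        add_le_add (abs_lossGrad_le_of_isMinimizer hγ hlam.le hmin c) (hG c)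
      _ = (1 + a) * lam * |w c| := by ring
  have hcif : cif X γ βo w a
      ≤ supNorm (fun c => gradDiff X γ βo (βh - βo) c / w c) / supNorm (βh - βo) := by
    refine csInf_le ⟨0, ?_⟩
      ⟨βh - βo, hν, inCone_sub_of_objective_le hconv hγ hlam (hmin βo) hG, rfl⟩
    rintro z ⟨ν, -, -, rfl⟩
    exact div_nonneg (supNorm_nonneg _) (supNorm_nonneg _)
  calc cif X γ βo w a * supNorm (βh - βo)
      ≤ supNorm (fun c => gradDiff X γ βo (βh - βo) c / w c) :=
        (le_div_iff₀ (supNorm_pos hν)).mp hcif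
    _ ≤ (1 + a) * lam := hgradDiff

end Deterministic

section Subgaussian

open scoped NNReal

variable {Ω : Type*} [MeasurableSpace Ω] {P : Measure Ω}

lemma hasSubgaussianMGF_of_lintegral_exp_le {Z : Ω → ℝ} (hZ : Measurable Z) {σ : ℝ}
    (h : ∀ u : ℝ, ∫⁻ ω, ENNReal.ofReal (Real.exp (u * Z ω)) ∂P
      ≤ ENNReal.ofReal (Real.exp (σ ^ 2 * u ^ 2 / 2))) :
    HasSubgaussianMGF Z (σ ^ 2).toNNReal P where
  integrable_exp_mul u := by
    refine ⟨(hZ.const_mul u).exp.aestronglyMeasurable, ?_⟩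
    rw [hasFiniteIntegral_iff_ofReal (ae_of_all _ fun ω => (Real.exp_pos _).le)]
    exact (h u).trans_lt ENNReal.ofReal_lt_top
  mgf_le u := by
    rw [mgf, integral_eq_lintegral_of_nonneg_ae (ae_of_all _ fun ω => (Real.exp_pos _).le)
      (hZ.const_mul u).exp.aestronglyMeasurable, Real.coe_toNNReal _ (sq_nonneg σ)]
    exact ENNReal.toReal_le_of_le_ofReal (Real.exp_pos _).le (h u)

lemma ProbabilityTheory.HasSubgaussianMGF.of_le {Z : Ω → ℝ} {c d : ℝ≥0}
    (h : HasSubgaussianMGF Z c P) (hcd : c ≤ d) : HasSubgaussianMGF Z d P where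
  integrable_exp_mul := h.integrable_exp_mul
  mgf_le t := (h.mgf_le t).trans (Real.exp_le_exp.mpr (by gcongr))

lemma ProbabilityTheory.HasSubgaussianMGF.measureReal_abs_ge_le [IsFiniteMeasure P] {Z : Ω → ℝ}
    {c : ℝ≥0} (h : HasSubgaussianMGF Z c P) {ε : ℝ} (hε : 0 ≤ ε) :
    P.real {ω | ε ≤ |Z ω|} ≤ 2 * Real.exp (-ε ^ 2 / (2 * c)) := by
  calc P.real {ω | ε ≤ |Z ω|} ≤ P.real ({ω | ε ≤ Z ω} ∪ {ω | ε ≤ (-Z) ω}) :=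
        measureReal_mono fun ω (hω : ε ≤ |Z ω|) => le_abs.mp hω
    _ ≤ P.real {ω | ε ≤ Z ω} + P.real {ω | ε ≤ (-Z) ω} := measureReal_union_le _ _
    _ ≤ 2 * Real.exp (-ε ^ 2 / (2 * c)) := by
        rw [two_mul]
        exact add_le_add (h.measure_ge_le hε) (h.neg.measure_ge_le hε)

lemma measureReal_abs_sum_mul_ge_le [IsProbabilityMeasure P] {ι : Type*} [Fintype ι]
    {Z : ι → Ω → ℝ} (hindep : iIndepFun Z P) {c : ℝ≥0} (hZ : ∀ i, HasSubgaussianMGF (Z i) c P)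
    (b : ι → ℝ) {B : ℝ} (hB : ∑ i, b i ^ 2 ≤ B ^ 2) {t : ℝ} (ht : 0 ≤ t) :
    P.real {ω | t ≤ |∑ i, b i * Z i ω|} ≤ 2 * Real.exp (-t ^ 2 / (2 * (B ^ 2 * c))) := by
  have hsum := HasSubgaussianMGF.sum_of_iIndepFun (s := Finset.univ)
    (hindep.comp (fun i x => b i * x) fun i => measurable_const_mul (b i))
    fun i _ => (hZ i).const_mul (b i)
  have htail := (hsum.of_le (d := (B ^ 2).toNNReal * c) ?_).measureReal_abs_ge_le ht
  · simpa [Real.coe_toNNReal _ (sq_nonneg B)] using htail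
  · rw [← NNReal.coe_le_coe]
    push_cast [Real.coe_toNNReal _ (sq_nonneg B)]
    calc _ = ∑ i, b i ^ 2 * (c : ℝ) := Finset.sum_congr rfl fun i _ => rfl
      _ ≤ B ^ 2 * c := by
        rw [← Finset.sum_mul]
        exact mul_le_mul_of_nonneg_right hB c.2

end Subgaussian

lemma sum_sq_le_sq_xW_mul {n r : ℕ} {p : Fin r → ℕ} (X : Fin n → ((k : Fin r) × Fin (p k)) → ℝ)
    {w : ((k : Fin r) × Fin (p k)) → ℝ} {c : (k : Fin r) × Fin (p k)} (hw : 0 < w c) :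
    ∑ i, X i c ^ 2 ≤ (xW X w * w c) ^ 2 := by
  have hcol : colNorm X c ≤ xW X w * w c :=
    (div_le_iff₀ hw).mp (le_ciSup (f := fun c => colNorm X c / w c) (Set.finite_range _).bddAbove c)
  calc ∑ i, X i c ^ 2 = colNorm X c ^ 2 := (Real.sq_sqrt (by positivity)).symm
    _ ≤ (xW X w * w c) ^ 2 := pow_le_pow_left₀ (Real.sqrt_nonneg _) hcol 2

theorem ofReal_one_sub_le_measure_abs_lossGrad_le
    {Ω : Type*} [MeasurableSpace Ω] (P : Measure Ω) [IsProbabilityMeasure P]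
    {n r : ℕ} {p : Fin r → ℕ} (X : Fin n → ((k : Fin r) × Fin (p k)) → ℝ) (γ : ℝ → ℝ)
    {y : Fin n → Ω → ℝ} (hymeas : ∀ i, Measurable (y i)) (hindep : iIndepFun y P)
    {βo : ((k : Fin r) × Fin (p k)) → ℝ} (hmean : ∀ i, ∫ ω, y i ω ∂P = deriv γ (dotRow X i βo))
    {σ : ℝ} (hsub : ∀ i, ∀ u : ℝ,
      ∫⁻ ω, ENNReal.ofReal (Real.exp (u * (y i ω - ∫ ω', y i ω' ∂P))) ∂P
        ≤ ENNReal.ofReal (Real.exp (σ ^ 2 * u ^ 2 / 2)))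
    {w : ((k : Fin r) × Fin (p k)) → ℝ} (hw : ∀ c, 0 < w c) {a α lam : ℝ} (ha : 0 < a)
    (hα : 0 < α) (hlam : 0 < lam)
    (hlam2 : lam ^ 2 = 2 * σ ^ 2 * (xW X w) ^ 2 *
      Real.log (2 * (Fintype.card ((k : Fin r) × Fin (p k))) / α) / a ^ 2) :
    ENNReal.ofReal (1 - α) ≤ P {ω | ∀ c, |lossGrad X γ y ω βo c| ≤ a * lam * |w c|} := by
  set E := {ω | ∀ c, |lossGrad X γ y ω βo c| ≤ a * lam * |w c|}
  generalize hN : (Fintype.card ((k : Fin r) × Fin (p k)) : ℝ) = N at hlam2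
  generalize hL : Real.log (2 * N / α) = L at hlam2
  set Z : Fin n → Ω → ℝ := fun i ω => y i ω - ∫ ω', y i ω' ∂P
  have hZ : ∀ i, HasSubgaussianMGF (Z i) (σ ^ 2).toNNReal P := fun i =>
    hasSubgaussianMGF_of_lintegral_exp_le ((hymeas i).sub_const _) (hsub i)
  have hZindep : iIndepFun Z P :=
    hindep.comp (fun i x => x - ∫ ω', y i ω' ∂P) fun i => measurable_id.sub_const _
  have hlossGrad : ∀ ω c, |lossGrad X γ y ω βo c| = |∑ i, X i c * Z i ω| := fun ω c => by
    rw [← abs_neg, lossGrad, ← Finset.sum_neg_distrib]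
    exact congrArg _ (Finset.sum_congr rfl fun i _ => by simp only [Z, hmean]; ring)
  have hlam2' := (eq_div_iff (by positivity)).mp hlam2
  obtain ⟨hσ, hxW, hL0⟩ : σ ≠ 0 ∧ xW X w ≠ 0 ∧ L ≠ 0 := by
    have : lam ^ 2 * a ^ 2 ≠ 0 := by positivity
    rw [hlam2'] at this
    simp_all
  have hNpos : 0 < N := (hN ▸ Nat.cast_nonneg _ : (0 : ℝ) ≤ N).lt_of_ne
    fun h => hL0 (by rw [← hL, ← h]; simp)
  have hexp : ∀ c, 2 * Real.exp (-(a * lam * |w c|) ^ 2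
      / (2 * ((xW X w * w c) ^ 2 * ((σ ^ 2).toNNReal : ℝ)))) = α / N := fun c => by
    have hwc := (hw c).ne'
    have hsq : (a * lam * |w c|) ^ 2 = L * (2 * ((xW X w * w c) ^ 2 * σ ^ 2)) := by
      rw [mul_pow, sq_abs]
      linear_combination w c ^ 2 * hlam2'
    rw [Real.coe_toNNReal _ (sq_nonneg σ), neg_div, hsq, mul_div_assoc, div_self (by positivity),
      mul_one, Real.exp_neg, ← hL, Real.exp_log (by positivity)]
    field_simp
  have hbad : P.real Eᶜ ≤ α :=
    calc _ ≤ P.real (⋃ c, {ω | a * lam * |w c| ≤ |∑ i, X i c * Z i ω|}) :=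
          measureReal_mono fun ω hω => by
            simp only [E, Set.mem_compl_iff, Set.mem_ofPred_eq, not_forall, not_le, hlossGrad] at hω
            obtain ⟨c, hc⟩ := hω
            exact Set.mem_iUnion.mpr ⟨c, hc.le⟩
      _ ≤ ∑ c, P.real {ω | a * lam * |w c| ≤ |∑ i, X i c * Z i ω|} :=
          measureReal_iUnion_fintype_le _
      _ ≤ ∑ _c : (k : Fin r) × Fin (p k), α / N := Finset.sum_le_sum fun c _ =>
          (measureReal_abs_sum_mul_ge_le hZindep hZ (fun i => X i c) (sum_sq_le_sq_xW_mul X (hw c))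
            (by positivity)).trans_eq (hexp c)
      _ = α := by
          rw [Finset.sum_const, Finset.card_univ, nsmul_eq_mul, hN]
          field_simp
  have hsplit := measureReal_union_le (μ := P) E Eᶜ
  rw [Set.union_compl_self, probReal_univ] at hsplit
  exact ENNReal.ofReal_le_of_le_toReal (by rw [← measureReal_def]; linarith)

lemma abs_levelVal_sub_le {r : ℕ} {p : Fin r → ℕ} {β β' : ((k : Fin r) × Fin (p k)) → ℝ} {ε : ℝ}
    (h : ∀ c, |β c - β' c| ≤ ε) (hε : 0 ≤ ε) (k : Fin r) (j : Option (Fin (p k))) :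
    |levelVal β k j - levelVal β' k j| ≤ ε := by
  cases j with
  | none => simpa [levelVal] using hε
  | some j => exact h ⟨k, j⟩

lemma abs_sub_le_iff_eq_of_abs_sub_le_half {u₁ u₂ v₁ v₂ τ Δ : ℝ} (h₁ : |u₁ - v₁| ≤ τ / 2)
    (h₂ : |u₂ - v₂| ≤ τ / 2) (hτΔ : 2 * τ < Δ) (hsep : v₁ ≠ v₂ → Δ ≤ |v₁ - v₂|) :
    |u₁ - u₂| ≤ τ ↔ v₁ = v₂ := by
  constructor
  · intro hu
    by_contra hv
    have htri₁ := abs_sub_le v₁ u₁ v₂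
    have htri₂ := abs_sub_le u₁ u₂ v₂
    rw [abs_sub_comm] at h₁
    linarith [hsep hv]
  · rintro rfl
    have htri := abs_sub_le u₁ v₁ u₂
    rw [abs_sub_comm v₁ u₂] at htri
    linarith

theorem glamer_proposition2_general
    {Ω : Type*} [MeasurableSpace Ω] (P : Measure Ω) [IsProbabilityMeasure P]
    {n r : ℕ} {p : Fin r → ℕ}
    (X : Fin n → ((k : Fin r) × Fin (p k)) → ℝ)
    (γ : ℝ → ℝ) (hγconv : ConvexOn ℝ Set.univ γ) (hγdiff : Differentiable ℝ γ)
    (y : Fin n → Ω → ℝ) (hymeas : ∀ i, Measurable (y i))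
    (hindep : iIndepFun y P)
    (βo : ((k : Fin r) × Fin (p k)) → ℝ)
    (hmean : ∀ i, ∫ ω, y i ω ∂P = deriv γ (dotRow X i βo))
    (σ : ℝ)
    (hsub : ∀ i, ∀ u : ℝ,
      ∫⁻ ω, ENNReal.ofReal (Real.exp (u * (y i ω - ∫ ω', y i ω' ∂P))) ∂P
        ≤ ENNReal.ofReal (Real.exp (σ ^ 2 * u ^ 2 / 2)))
    (w : ((k : Fin r) × Fin (p k)) → ℝ) (hw : ∀ c, 0 < w c)
    (a : ℝ) (ha : a ∈ Set.Ioo (0 : ℝ) 1) (α : ℝ) (hα : α ∈ Set.Ioo (0 : ℝ) 1)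
    (lam : ℝ) (hlam : 0 < lam)
    (hlam2 : lam ^ 2 = 2 * σ ^ 2 * (xW X w) ^ 2 *
      Real.log (2 * (Fintype.card ((k : Fin r) × Fin (p k))) / α) / a ^ 2)
    (βhat : Ω → ((k : Fin r) × Fin (p k)) → ℝ)
    (hmin : ∀ᵐ ω ∂P, ∀ β : ((k : Fin r) × Fin (p k)) → ℝ,
      loss X γ y ω (βhat ω) + lam * ∑ k : Fin r, groupNorm w (βhat ω) k
        ≤ loss X γ y ω β + lam * ∑ k : Fin r, groupNorm w β k)
    (hζ : 0 < cif X γ βo w a)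
    (τ Δ : ℝ) (hτ : 0 < τ) (hΔpos : 0 < Δ)
    (hΔ : ∀ (k : Fin r) (j₁ j₂ : Option (Fin (p k))),
      levelVal βo k j₁ ≠ levelVal βo k j₂ → Δ ≤ |levelVal βo k j₁ - levelVal βo k j₂|)
    (hτlow : 8 * (1 + a) ^ 2 * (xW X w) ^ 2 * σ ^ 2 *
      Real.log (2 * (Fintype.card ((k : Fin r) × Fin (p k))) / α) /
        (a ^ 2 * (cif X γ βo w a) ^ 2) ≤ τ ^ 2)
    (hτhigh : τ ^ 2 < Δ ^ 2 / 4) :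
    ENNReal.ofReal (1 - α) ≤
      P {ω | ∀ (k : Fin r) (j₁ j₂ : Option (Fin (p k))),
        |levelVal (βhat ω) k j₁ - levelVal (βhat ω) k j₂| ≤ τ ↔
          levelVal βo k j₁ = levelVal βo k j₂} := by
  obtain ⟨ha₀, -⟩ := ha
  have hgap : 2 * τ < Δ := lt_of_pow_lt_pow_left₀ 2 hΔpos.le (by linarith)
  have hlamτ : 2 * ((1 + a) * lam) ≤ τ * cif X γ βo w a := by
    rw [div_le_iff₀ (by positivity)] at hτlow
    have hlam2' := (eq_div_iff (by positivity)).mp hlam2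
    have hsq : a ^ 2 * (2 * ((1 + a) * lam)) ^ 2 ≤ a ^ 2 * (τ * cif X γ βo w a) ^ 2 := by
      linear_combination (exp := 1) hτlow + 4 * (1 + a) ^ 2 * hlam2'
    exact le_of_pow_le_pow_left₀ two_ne_zero (by positivity)
      (le_of_mul_le_mul_left hsq (by positivity))
  refine (ofReal_one_sub_le_measure_abs_lossGrad_le P X γ hymeas hindep hmean hsub hw ha₀ hα.1
    hlam hlam2).trans (measure_mono_ae ?_)
  filter_upwards [hmin] with ω hminω hG k j₁ j₂
  have hclose : ∀ c, |βhat ω c - βo c| ≤ τ / 2 := fun c => by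
    have hcif := cif_mul_supNorm_sub_le hγconv hγdiff ha₀.le hlam hminω hG
    have hc : |βhat ω c - βo c| ≤ _ := abs_le_supNorm (βhat ω - βo) c
    have : cif X γ βo w a * (2 * supNorm (βhat ω - βo)) ≤ cif X γ βo w a * τ := by linarith
    linarith [le_of_mul_le_mul_left this hζ]
  exact abs_sub_le_iff_eq_of_abs_sub_le_half (abs_levelVal_sub_le hclose (by positivity) k j₁)
    (abs_levelVal_sub_le hclose (by positivity) k j₂) hgap (hΔ k j₁ j₂)

/-- Proposition 2 (non-asymptotic form): under the conditions of Proposition 1, if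
`8(1+a)²a⁻²x_W²ζ⁻²σ² log(2p/α) ≤ τ²` and `τ² < Δ²/4`, then with probability at least
`1 − α`, merging levels whose Group Lasso coefficients differ by at most `τ` recovers
exactly the true model `M_{β°}`. -/
theorem glamer_proposition2
    {Ω : Type*} [MeasurableSpace Ω] (P : Measure Ω) [IsProbabilityMeasure P]
    {n r : ℕ} {p : Fin r → ℕ}
    (X : Fin n → ((k : Fin r) × Fin (p k)) → ℝ)
    (γ : ℝ → ℝ) (hγconv : ConvexOn ℝ Set.univ γ) (hγdiff : Differentiable ℝ γ)
    (y : Fin n → Ω → ℝ) (hymeas : ∀ i, Measurable (y i))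
    (hindep : iIndepFun y P)
    (βo : ((k : Fin r) × Fin (p k)) → ℝ)
    (hmean : ∀ i, ∫ ω, y i ω ∂P = deriv γ (dotRow X i βo))
    (σ : ℝ) (hσ : 0 < σ)
    (hsub : ∀ i, ∀ u : ℝ,
      ∫⁻ ω, ENNReal.ofReal (Real.exp (u * (y i ω - ∫ ω', y i ω' ∂P))) ∂P
        ≤ ENNReal.ofReal (Real.exp (σ ^ 2 * u ^ 2 / 2)))
    (w : ((k : Fin r) × Fin (p k)) → ℝ) (hw : ∀ c, 0 < w c)
    (a : ℝ) (ha : a ∈ Set.Ioo (0 : ℝ) 1) (α : ℝ) (hα : α ∈ Set.Ioo (0 : ℝ) 1)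
    (lam : ℝ) (hlam : 0 < lam)
    (hlam2 : lam ^ 2 = 2 * σ ^ 2 * (xW X w) ^ 2 *
      Real.log (2 * (Fintype.card ((k : Fin r) × Fin (p k))) / α) / a ^ 2)
    (βhat : Ω → ((k : Fin r) × Fin (p k)) → ℝ) (hβhat : Measurable βhat)
    (hmin : ∀ᵐ ω ∂P, ∀ β : ((k : Fin r) × Fin (p k)) → ℝ,
      loss X γ y ω (βhat ω) + lam * ∑ k : Fin r, groupNorm w (βhat ω) k
        ≤ loss X γ y ω β + lam * ∑ k : Fin r, groupNorm w β k)
    (hζ : 0 < cif X γ βo w a)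
    (τ Δ : ℝ) (hτ : 0 < τ) (hΔpos : 0 < Δ)
    (hΔ : ∀ (k : Fin r) (j₁ j₂ : Option (Fin (p k))),
      levelVal βo k j₁ ≠ levelVal βo k j₂ → Δ ≤ |levelVal βo k j₁ - levelVal βo k j₂|)
    (hτlow : 8 * (1 + a) ^ 2 * (xW X w) ^ 2 * σ ^ 2 *
      Real.log (2 * (Fintype.card ((k : Fin r) × Fin (p k))) / α) /
        (a ^ 2 * (cif X γ βo w a) ^ 2) ≤ τ ^ 2)
    (hτhigh : τ ^ 2 < Δ ^ 2 / 4) :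
    ENNReal.ofReal (1 - α) ≤
      P {ω | ∀ (k : Fin r) (j₁ j₂ : Option (Fin (p k))),
        |levelVal (βhat ω) k j₁ - levelVal (βhat ω) k j₂| ≤ τ ↔
          levelVal βo k j₁ = levelVal βo k j₂} :=
  glamer_proposition2_general P X γ hγconv hγdiff y hymeas hindep βo hmean σ hsub w hw a ha α hα lam
    hlam hlam2 βhat hmin hζ τ Δ hτ hΔpos hΔ hτlow hτhigh
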